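/- For all positive integers p, q, m, n, the fold map ι is a well-defined injective group homomorphism from K(p,q) to K(mp,nq): for every ψ ∈ K(p,q) the function ι(ψ) vanishes outside Γ(mp,nq) and satisfies 4·ι(ψ)(v) = Σ_{|w−v|=1} ι(ψ)(w) for all v ∈ Γ(mp,nq); moreover ι is additive and injective. (This realizes the sandpile group G(p,q) of the rectangle as a subgroup of G(mp,nq).) -/

import Mathlib

open scoped BigOperators

/-- `v` lies in the open rectangle `Γ(p,q) = (0,p) × (0,q) ∩ ℤ²`. -/
def InRect (p q : ℤ) (v : ℤ × ℤ) : Prop :=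
  0 < v.1 ∧ v.1 < p ∧ 0 < v.2 ∧ v.2 < q

/-- `ψ : ℤ² → ℝ/ℤ` belongs to `K(p,q)`, the realization of the sandpile group
`G(p,q)`: it vanishes outside `Γ(p,q)` and satisfies
`4·ψ(v) = Σ_{|w−v|=1} ψ(w)` for all `v ∈ Γ(p,q)`. -/
def IsK (p q : ℤ) (ψ : ℤ × ℤ → AddCircle (1 : ℝ)) : Prop :=
  (∀ v, ¬ InRect p q v → ψ v = 0) ∧
  ∀ v, InRect p q v → (4 : ℤ) • ψ v =
    ψ (v.1 + 1, v.2) + ψ (v.1 - 1, v.2) + ψ (v.1, v.2 + 1) + ψ (v.1, v.2 - 1)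

/-- `σ_p(x) = x − kp` if `k = ⌊x/p⌋` is even and `(k+1)p − x` if `k` is odd. -/
def sigmaFold (p x : ℤ) : ℤ :=
  if Even (x / p) then x - x / p * p else (x / p + 1) * p - x

open Classical in
/-- The fold map `ι : K(p,q) → K(P,Q)` (with `P = mp`, `Q = nq`):
`ι(ψ)(x,y) = (−1)^{⌊x/p⌋+⌊y/q⌋} ψ(σ_p(x), σ_q(y))` on `Γ(P,Q)` and `0` outside. -/
noncomputable def foldMap (p q P Q : ℤ) (ψ : ℤ × ℤ → AddCircle (1 : ℝ)) :
    ℤ × ℤ → AddCircle (1 : ℝ) :=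
  fun v => if InRect P Q v then
      ((if Even (v.1 / p + v.2 / q) then (1 : ℤ) else -1)) •
        ψ (sigmaFold p v.1, sigmaFold q v.2)
    else 0

/-- `μ_{p,k}(x) = kp + x` if `k` is even and `(k+1)p − x` if `k` is odd. -/
def muFold (p k x : ℤ) : ℤ := if Even k then k * p + x else (k + 1) * p - x

open Classical in
/-- The dual map `π : K(mp,nq) → K(p,q)`:
`π(ψ)(x,y) = Σ_{k<m} Σ_{l<n} (−1)^{k+l} ψ(μ_{p,k}(x), μ_{q,l}(y))` on `Γ(p,q)`
and `0` outside. -/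
noncomputable def dualMap (p q : ℤ) (m n : ℕ) (ψ : ℤ × ℤ → AddCircle (1 : ℝ)) :
    ℤ × ℤ → AddCircle (1 : ℝ) :=
  fun v => if InRect p q v then
      ∑ k ∈ Finset.range m, ∑ l ∈ Finset.range n,
        ((-1 : ℤ) ^ (k + l)) • ψ (muFold p k v.1, muFold q l v.2)
    else 0

/-!
`ι(ψ)` is the restriction to `Γ(mp,nq)` of the extension of `ψ` that is odd and `2p`-periodic
in `x` and odd and `2q`-periodic in `y`. Because `ψ` vanishes on the boundary of `Γ(p,q)`, this
extension satisfies the discrete Laplace equation on all of `ℤ²`: on the lines `x ∈ pℤ` it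
vanishes and its two horizontal neighbours cancel by oddness (likewise for `y ∈ qℤ`), and at any
other point the fold maps the point and its four neighbours to a point of `Γ(p,q)` and its
neighbours, up to one common sign. The extension vanishes on the boundary of `Γ(mp,nq)`, so `ι(ψ)`
lies in `K(mp,nq)`, and it agrees with `ψ` on `Γ(p,q) ⊆ Γ(mp,nq)`, which gives injectivity.
-/

section OddPeriodicExt

variable {A : Type*} [AddCommGroup A] {p : ℤ}

def oddPeriodicExt (p : ℤ) (f : ℤ → A) (x : ℤ) : A :=
  (x / p).negOnePow • f (sigmaFold p x)

lemma mul_add_ediv_of_lt {k r : ℤ} (hr : 0 ≤ r) (hrp : r < p) : (k * p + r) / p = k := by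
  rw [add_comm, Int.add_mul_ediv_right _ _ (by omega), Int.ediv_eq_zero_of_lt hr hrp, zero_add]

lemma sigmaFold_mul_add {k r : ℤ} (hr : 0 ≤ r) (hrp : r < p) :
    sigmaFold p (k * p + r) = if Even k then r else p - r := by
  rw [sigmaFold, mul_add_ediv_of_lt hr hrp]
  split_ifs <;> ring

lemma exists_mul_add_of_not_dvd (hp : 0 < p) {x : ℤ} (hx : ¬ p ∣ x) :
    ∃ k r, x = k * p + r ∧ 0 < r ∧ r < p :=
  ⟨x / p, x % p, (Int.ediv_mul_add_emod x p).symm,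
    (Int.emod_nonneg x hp.ne').lt_of_ne' fun h => hx (Int.dvd_of_emod_eq_zero h),
    Int.emod_lt_of_pos x hp⟩

lemma sigmaFold_mem_Ioo (hp : 0 < p) {x : ℤ} (hx : ¬ p ∣ x) :
    0 < sigmaFold p x ∧ sigmaFold p x < p := by
  obtain ⟨k, r, rfl, hr, hrp⟩ := exists_mul_add_of_not_dvd hp hx
  rw [sigmaFold_mul_add hr.le hrp]
  split_ifs <;> omega

lemma oddPeriodicExt_mul_add_of_lt (f : ℤ → A) {k r : ℤ} (hr : 0 ≤ r) (hrp : r < p) :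
    oddPeriodicExt p f (k * p + r) = k.negOnePow • f (if Even k then r else p - r) := by
  rw [oddPeriodicExt, mul_add_ediv_of_lt hr hrp, sigmaFold_mul_add hr hrp]

lemma oddPeriodicExt_of_lt (f : ℤ → A) {x : ℤ} (hx : 0 ≤ x) (hxp : x < p) :
    oddPeriodicExt p f x = f x := by
  simpa using oddPeriodicExt_mul_add_of_lt f (k := 0) hx hxp

variable {f : ℤ → A}

lemma oddPeriodicExt_mul_add (hf0 : f 0 = 0) (hfp : f p = 0) (hp : 0 < p) {k s : ℤ}
    (hs : 0 ≤ s) (hsp : s ≤ p) :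
    oddPeriodicExt p f (k * p + s) = k.negOnePow • f (if Even k then s else p - s) := by
  obtain hsp | rfl := hsp.lt_or_eq
  · exact oddPeriodicExt_mul_add_of_lt f hs hsp
  · rw [show k * s + s = (k + 1) * s + 0 by ring,
      oddPeriodicExt_mul_add_of_lt f le_rfl hp]
    split_ifs <;> simp [hf0, hfp]

lemma oddPeriodicExt_of_dvd (hf0 : f 0 = 0) (hfp : f p = 0) (hp : 0 < p) {x : ℤ}
    (hx : p ∣ x) : oddPeriodicExt p f x = 0 := by
  obtain ⟨k, rfl⟩ := hx
  rw [mul_comm, ← add_zero (k * p), oddPeriodicExt_mul_add_of_lt f le_rfl hp]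
  split_ifs <;> simp [hf0, hfp]

lemma oddPeriodicExt_add_one_add_sub_one_of_dvd (hf0 : f 0 = 0) (hfp : f p = 0) (hp : 0 < p)
    {x : ℤ} (hx : p ∣ x) : oddPeriodicExt p f (x + 1) + oddPeriodicExt p f (x - 1) = 0 := by
  obtain ⟨k, rfl⟩ := hx
  have hk : (k - 1).negOnePow = -k.negOnePow := by
    rw [Int.negOnePow_sub, Int.negOnePow_one, mul_neg_one]
  rw [show p * k + 1 = k * p + 1 by ring, show p * k - 1 = (k - 1) * p + (p - 1) by ring,
    oddPeriodicExt_mul_add hf0 hfp hp zero_le_one (by omega),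
    oddPeriodicExt_mul_add hf0 hfp hp (by omega) (by omega)]
  simp only [hk, Int.even_sub_one, sub_sub_cancel]
  split_ifs <;> simp

lemma oddPeriodicExt_add_one_add_sub_one (hf0 : f 0 = 0) (hfp : f p = 0) (hp : 0 < p)
    {x : ℤ} (hx : ¬ p ∣ x) :
    oddPeriodicExt p f (x + 1) + oddPeriodicExt p f (x - 1) =
      (x / p).negOnePow • (f (sigmaFold p x + 1) + f (sigmaFold p x - 1)) := by
  obtain ⟨k, r, rfl, hr, hrp⟩ := exists_mul_add_of_not_dvd hp hx
  rw [show k * p + r + 1 = k * p + (r + 1) by ring, show k * p + r - 1 = k * p + (r - 1) by ring,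
    oddPeriodicExt_mul_add hf0 hfp hp (by omega) (by omega),
    oddPeriodicExt_mul_add hf0 hfp hp (by omega) (by omega),
    mul_add_ediv_of_lt (by omega) (by omega), sigmaFold_mul_add (by omega) (by omega), ← smul_add]
  split_ifs
  · rfl
  · rw [add_comm, sub_add, sub_sub]

end OddPeriodicExt

section OddPeriodicExt₂

variable {A : Type*} [AddCommGroup A] {p q : ℤ} {ψ : ℤ × ℤ → A}

def IsDiscreteHarmonicAt (ψ : ℤ × ℤ → A) (v : ℤ × ℤ) : Prop :=
  (4 : ℤ) • ψ v = ψ (v.1 + 1, v.2) + ψ (v.1 - 1, v.2) + ψ (v.1, v.2 + 1) + ψ (v.1, v.2 - 1)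

def oddPeriodicExt₂ (p q : ℤ) (ψ : ℤ × ℤ → A) (v : ℤ × ℤ) : A :=
  oddPeriodicExt p (fun x => oddPeriodicExt q (fun y => ψ (x, y)) v.2) v.1

lemma oddPeriodicExt₂_apply (p q : ℤ) (ψ : ℤ × ℤ → A) (x y : ℤ) :
    oddPeriodicExt₂ p q ψ (x, y) =
      (x / p + y / q).negOnePow • ψ (sigmaFold p x, sigmaFold q y) := by
  rw [oddPeriodicExt₂, oddPeriodicExt, oddPeriodicExt, Int.negOnePow_add, mul_smul]

lemma oddPeriodicExt₂_eq_snd (p q : ℤ) (ψ : ℤ × ℤ → A) (x y : ℤ) :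
    oddPeriodicExt₂ p q ψ (x, y) =
      oddPeriodicExt q (fun y => oddPeriodicExt p (fun x => ψ (x, y)) x) y :=
  smul_comm _ _ _

lemma oddPeriodicExt₂_of_dvd_fst (hp : 0 < p) (hψ0 : ∀ v, ¬ InRect p q v → ψ v = 0) {x : ℤ}
    (hx : p ∣ x) (y : ℤ) : oddPeriodicExt₂ p q ψ (x, y) = 0 := by
  refine oddPeriodicExt_of_dvd ?_ ?_ hp hx <;> simp [oddPeriodicExt, hψ0, InRect]

lemma oddPeriodicExt₂_of_dvd_snd (hq : 0 < q) (hψ0 : ∀ v, ¬ InRect p q v → ψ v = 0) {y : ℤ}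
    (hy : q ∣ y) (x : ℤ) : oddPeriodicExt₂ p q ψ (x, y) = 0 := by
  rw [oddPeriodicExt₂_eq_snd]
  refine oddPeriodicExt_of_dvd ?_ ?_ hq hy <;> simp [oddPeriodicExt, hψ0, InRect]

theorem isDiscreteHarmonicAt_oddPeriodicExt₂ (hp : 0 < p) (hq : 0 < q)
    (hψ0 : ∀ v, ¬ InRect p q v → ψ v = 0) (hψ : ∀ v, InRect p q v → IsDiscreteHarmonicAt ψ v)
    (v : ℤ × ℤ) : IsDiscreteHarmonicAt (oddPeriodicExt₂ p q ψ) v := by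
  obtain ⟨x, y⟩ := v
  set g := fun t => oddPeriodicExt q (fun s => ψ (t, s)) y
  set h := fun s => oddPeriodicExt p (fun t => ψ (t, s)) x
  have hg : g 0 = 0 ∧ g p = 0 := by simp [g, oddPeriodicExt, hψ0, InRect]
  have hh : h 0 = 0 ∧ h q = 0 := by simp [h, oddPeriodicExt, hψ0, InRect]
  have hrow : oddPeriodicExt₂ p q ψ (x + 1, y) + oddPeriodicExt₂ p q ψ (x - 1, y) =
      oddPeriodicExt p g (x + 1) + oddPeriodicExt p g (x - 1) := rfl
  have hcol : oddPeriodicExt₂ p q ψ (x, y + 1) + oddPeriodicExt₂ p q ψ (x, y - 1) =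
      oddPeriodicExt q h (y + 1) + oddPeriodicExt q h (y - 1) := by
    rw [oddPeriodicExt₂_eq_snd, oddPeriodicExt₂_eq_snd]
  change (4 : ℤ) • oddPeriodicExt₂ p q ψ (x, y) = _ + _ + _ + _
  rw [add_assoc]
  by_cases hx : p ∣ x
  · rw [hrow, oddPeriodicExt_add_one_add_sub_one_of_dvd hg.1 hg.2 hp hx]
    simp [oddPeriodicExt₂_of_dvd_fst hp hψ0 hx]
  by_cases hy : q ∣ y
  · rw [hcol, oddPeriodicExt_add_one_add_sub_one_of_dvd hh.1 hh.2 hq hy]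
    simp [oddPeriodicExt₂_of_dvd_snd hq hψ0 hy]
  obtain ⟨hx0, hxp⟩ := sigmaFold_mem_Ioo hp hx
  obtain ⟨hy0, hyq⟩ := sigmaFold_mem_Ioo hq hy
  rw [hrow, hcol, oddPeriodicExt_add_one_add_sub_one hg.1 hg.2 hp hx,
    oddPeriodicExt_add_one_add_sub_one hh.1 hh.2 hq hy]
  simp only [g, h, oddPeriodicExt₂, oddPeriodicExt]
  rw [smul_comm (4 : ℤ), smul_comm (4 : ℤ), hψ _ ⟨hx0, hxp, hy0, hyq⟩]
  simp only [smul_add, smul_comm (y / q).negOnePow (x / p).negOnePow]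
  abel

end OddPeriodicExt₂

section FoldMap

variable {p q P Q : ℤ}

lemma ite_even_one_neg_one (n : ℤ) : (if Even n then (1 : ℤ) else -1) = n.negOnePow := by
  split_ifs with h
  · simp [Int.negOnePow_even n h]
  · simp [Int.negOnePow_odd n (Int.not_even_iff_odd.mp h)]

open Classical in
lemma foldMap_eq_ite (p q P Q : ℤ) (ψ : ℤ × ℤ → AddCircle (1 : ℝ)) (v : ℤ × ℤ) :
    foldMap p q P Q ψ v = if InRect P Q v then oddPeriodicExt₂ p q ψ v else 0 := by
  obtain ⟨x, y⟩ := v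
  simp only [foldMap, oddPeriodicExt₂_apply, Units.smul_def, ite_even_one_neg_one]

lemma foldMap_add (p q P Q : ℤ) (ψ₁ ψ₂ : ℤ × ℤ → AddCircle (1 : ℝ)) :
    foldMap p q P Q (ψ₁ + ψ₂) = foldMap p q P Q ψ₁ + foldMap p q P Q ψ₂ := by
  ext v
  simp only [foldMap, Pi.add_apply]
  split_ifs <;> simp [smul_add]

lemma foldMap_of_inRect (hpP : p ≤ P) (hqQ : q ≤ Q) (ψ : ℤ × ℤ → AddCircle (1 : ℝ))
    {v : ℤ × ℤ} (hv : InRect p q v) : foldMap p q P Q ψ v = ψ v := by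
  obtain ⟨x, y⟩ := v
  obtain ⟨hx0, hxp, hy0, hyq⟩ := hv
  rw [foldMap_eq_ite, if_pos ⟨hx0, hxp.trans_le hpP, hy0, hyq.trans_le hqQ⟩, oddPeriodicExt₂,
    oddPeriodicExt_of_lt _ hx0.le hxp, oddPeriodicExt_of_lt _ hy0.le hyq]

lemma foldMap_injOn (hpP : p ≤ P) (hqQ : q ≤ Q) :
    Set.InjOn (foldMap p q P Q) {ψ | IsK p q ψ} := by
  intro ψ₁ hψ₁ ψ₂ hψ₂ h
  ext v
  by_cases hv : InRect p q v
  · rw [← foldMap_of_inRect hpP hqQ ψ₁ hv, ← foldMap_of_inRect hpP hqQ ψ₂ hv, h]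
  · rw [hψ₁.1 v hv, hψ₂.1 v hv]

lemma foldMap_eq_oddPeriodicExt₂ (hp : 0 < p) (hq : 0 < q) (hP : p ∣ P) (hQ : q ∣ Q)
    {ψ : ℤ × ℤ → AddCircle (1 : ℝ)} (hψ0 : ∀ v, ¬ InRect p q v → ψ v = 0) {x y : ℤ}
    (hx0 : 0 ≤ x) (hxP : x ≤ P) (hy0 : 0 ≤ y) (hyQ : y ≤ Q) :
    foldMap p q P Q ψ (x, y) = oddPeriodicExt₂ p q ψ (x, y) := by
  rw [foldMap_eq_ite]
  split_ifs with hv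
  · rfl
  have : x = 0 ∨ x = P ∨ y = 0 ∨ y = Q := by simp only [InRect] at hv; omega
  rcases this with rfl | rfl | rfl | rfl
  · exact (oddPeriodicExt₂_of_dvd_fst hp hψ0 (dvd_zero p) y).symm
  · exact (oddPeriodicExt₂_of_dvd_fst hp hψ0 hP y).symm
  · exact (oddPeriodicExt₂_of_dvd_snd hq hψ0 (dvd_zero q) x).symm
  · exact (oddPeriodicExt₂_of_dvd_snd hq hψ0 hQ x).symm

lemma isK_foldMap (hp : 0 < p) (hq : 0 < q) (hP : p ∣ P) (hQ : q ∣ Q)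
    {ψ : ℤ × ℤ → AddCircle (1 : ℝ)} (hψ : IsK p q ψ) : IsK P Q (foldMap p q P Q ψ) := by
  refine ⟨fun v hv => by rw [foldMap_eq_ite, if_neg hv], ?_⟩
  rintro ⟨x, y⟩ ⟨hx0, hxP, hy0, hyQ⟩
  simp (disch := omega) only [foldMap_eq_oddPeriodicExt₂ hp hq hP hQ hψ.1]
  exact isDiscreteHarmonicAt_oddPeriodicExt₂ hp hq hψ.1 hψ.2 (x, y)

end FoldMap

/-- The fold map `ι` is a well-defined injective group homomorphism from
`K(p,q)` to `K(mp,nq)`: it maps `K(p,q)` into `K(mp,nq)`, is additive, and is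
injective.  This realizes `G(p,q)` as a subgroup of `G(mp,nq)`. -/
theorem foldMap_monomorphism (p q m n : ℕ)
    (hp : 0 < p) (hq : 0 < q) (hm : 0 < m) (hn : 0 < n) :
    (∀ ψ, IsK p q ψ →
      IsK ((m : ℤ) * p) ((n : ℤ) * q) (foldMap p q ((m : ℤ) * p) ((n : ℤ) * q) ψ)) ∧
    (∀ ψ₁ ψ₂, IsK p q ψ₁ → IsK p q ψ₂ →
      foldMap p q ((m : ℤ) * p) ((n : ℤ) * q) (ψ₁ + ψ₂) =
        foldMap p q ((m : ℤ) * p) ((n : ℤ) * q) ψ₁ +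
        foldMap p q ((m : ℤ) * p) ((n : ℤ) * q) ψ₂) ∧
    (∀ ψ₁ ψ₂, IsK p q ψ₁ → IsK p q ψ₂ →
      foldMap p q ((m : ℤ) * p) ((n : ℤ) * q) ψ₁ =
        foldMap p q ((m : ℤ) * p) ((n : ℤ) * q) ψ₂ → ψ₁ = ψ₂) := by
  have hp' : (0 : ℤ) < p := by exact_mod_cast hp
  have hq' : (0 : ℤ) < q := by exact_mod_cast hq
  have hpP : (p : ℤ) ≤ m * p := le_mul_of_one_le_left hp'.le (by exact_mod_cast hm)
  have hqQ : (q : ℤ) ≤ n * q := le_mul_of_one_le_left hq'.le (by exact_mod_cast hn)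
  exact ⟨fun _ hψ => isK_foldMap hp' hq' (dvd_mul_left _ _) (dvd_mul_left _ _) hψ,
    fun _ _ _ _ => foldMap_add .., fun _ _ h₁ h₂ h => foldMap_injOn hpP hqQ h₁ h₂ h⟩
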